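/- arXiv:1208.3154 — 11 statements merged into one kernel-verified Lean document; each statement's English description precedes it below -/
import Mathlib

section
/- Let U and W be Banach spaces and E, A : U → W bounded linear operators. If A(ker E) is closed in W, then the system (E, A) is normal (i.e., conditions (N1) and (N2) hold) if and only if the subspace closure(A(ker E)) + closure(ran E) is closed in W. -/
/-! Since `A(ker E)` is closed, condition (N2) only compares intersections of closed subspaces,
so it always holds; and `closure(ran E) + A(ker E)` lies between `ran E + A(ker E)` and the
closure of that sum, so (N1) says exactly that it is closed. -/

namespace Submodule

variable {R M : Type*} [Semiring R] [AddCommMonoid M] [Module R M] [TopologicalSpace M]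
  [ContinuousAdd M] [ContinuousConstSMul R M]

theorem topologicalClosure_sup_eq_iff_isClosed {p q : Submodule R M} :
    p.topologicalClosure ⊔ q = (p ⊔ q).topologicalClosure ↔
      IsClosed ((p.topologicalClosure ⊔ q : Submodule R M) : Set M) := by
  constructor
  · intro hpq
    rw [hpq]
    exact (p ⊔ q).isClosed_topologicalClosure
  · intro hclosed
    apply le_antisymm
    · exact sup_le (topologicalClosure_mono le_sup_left)
        (le_sup_right.trans (p ⊔ q).le_topologicalClosure)
    · exact topologicalClosure_minimal _ (sup_le_sup_right p.le_topologicalClosure q) hclosed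

theorem topologicalClosure_inf_eq_of_isClosed {p q : Submodule R M}
    (hp : IsClosed (p : Set M)) (hq : IsClosed (q : Set M)) :
    (p ⊓ q).topologicalClosure = p.topologicalClosure ⊓ q.topologicalClosure := by
  rw [hp.submodule_topologicalClosure_eq, hq.submodule_topologicalClosure_eq]
  exact (hp.inter hq).submodule_topologicalClosure_eq

end Submodule

theorem normal_iff_isClosed_sup_of_isClosed_map_ker_general
    {U W : Type*} [NormedAddCommGroup U] [NormedSpace ℝ U]
    [NormedAddCommGroup W] [NormedSpace ℝ W]
    (E A : U →L[ℝ] W)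
    (h : IsClosed ((Submodule.map (A : U →ₗ[ℝ] W) (LinearMap.ker (E : U →ₗ[ℝ] W))) : Set W)) :
    (((LinearMap.range (E : U →ₗ[ℝ] W)).topologicalClosure ⊔ Submodule.map (A : U →ₗ[ℝ] W) (LinearMap.ker (E : U →ₗ[ℝ] W))
        = (LinearMap.range (E : U →ₗ[ℝ] W) ⊔ Submodule.map (A : U →ₗ[ℝ] W) (LinearMap.ker (E : U →ₗ[ℝ] W))).topologicalClosure)
      ∧ (((LinearMap.range (E : U →ₗ[ℝ] W)).topologicalClosure ⊓
            Submodule.map (A : U →ₗ[ℝ] W) (LinearMap.ker (E : U →ₗ[ℝ] W))).topologicalClosure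
          = (LinearMap.range (E : U →ₗ[ℝ] W)).topologicalClosure ⊓
            (Submodule.map (A : U →ₗ[ℝ] W) (LinearMap.ker (E : U →ₗ[ℝ] W))).topologicalClosure))
    ↔ IsClosed (((Submodule.map (A : U →ₗ[ℝ] W) (LinearMap.ker (E : U →ₗ[ℝ] W))).topologicalClosure ⊔
        (LinearMap.range (E : U →ₗ[ℝ] W)).topologicalClosure : Submodule ℝ W) : Set W) := by
  set M := Submodule.map (A : U →ₗ[ℝ] W) (LinearMap.ker (E : U →ₗ[ℝ] W))
  set R := LinearMap.range (E : U →ₗ[ℝ] W)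
  have hN2 : (R.topologicalClosure ⊓ M).topologicalClosure =
      R.topologicalClosure.topologicalClosure ⊓ M.topologicalClosure :=
    Submodule.topologicalClosure_inf_eq_of_isClosed R.isClosed_topologicalClosure h
  rw [R.isClosed_topologicalClosure.submodule_topologicalClosure_eq] at hN2
  rw [and_iff_left hN2, Submodule.topologicalClosure_sup_eq_iff_isClosed,
    h.submodule_topologicalClosure_eq, sup_comm]

/-- If `A(ker E)` is closed, then the system `(E, A)` is normal
(conditions (N1) and (N2)) iff `closure(A(ker E)) + closure(ran E)` is closed in `W`. -/
theorem normal_iff_isClosed_sup_of_isClosed_map_ker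
    {U W : Type*} [NormedAddCommGroup U] [NormedSpace ℝ U] [CompleteSpace U]
    [NormedAddCommGroup W] [NormedSpace ℝ W] [CompleteSpace W]
    (E A : U →L[ℝ] W)
    (h : IsClosed ((Submodule.map (A : U →ₗ[ℝ] W) (LinearMap.ker (E : U →ₗ[ℝ] W))) : Set W)) :
    (((LinearMap.range (E : U →ₗ[ℝ] W)).topologicalClosure ⊔ Submodule.map (A : U →ₗ[ℝ] W) (LinearMap.ker (E : U →ₗ[ℝ] W))
        = (LinearMap.range (E : U →ₗ[ℝ] W) ⊔ Submodule.map (A : U →ₗ[ℝ] W) (LinearMap.ker (E : U →ₗ[ℝ] W))).topologicalClosure)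
      ∧ (((LinearMap.range (E : U →ₗ[ℝ] W)).topologicalClosure ⊓
            Submodule.map (A : U →ₗ[ℝ] W) (LinearMap.ker (E : U →ₗ[ℝ] W))).topologicalClosure
          = (LinearMap.range (E : U →ₗ[ℝ] W)).topologicalClosure ⊓
            (Submodule.map (A : U →ₗ[ℝ] W) (LinearMap.ker (E : U →ₗ[ℝ] W))).topologicalClosure))
    ↔ IsClosed (((Submodule.map (A : U →ₗ[ℝ] W) (LinearMap.ker (E : U →ₗ[ℝ] W))).topologicalClosure ⊔
        (LinearMap.range (E : U →ₗ[ℝ] W)).topologicalClosure : Submodule ℝ W) : Set W) :=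
  normal_iff_isClosed_sup_of_isClosed_map_ker_general E A h
end

section
/- Let U and W be Banach spaces and E, A : U → W bounded linear operators. Assume (N1): closure(ran E) + A(ker E) = closure(ran E + A(ker E)), and assume the strengthened intersection condition A(ker E) ∩ closure(ran E) = closure(A(ker E)) ∩ closure(ran E). Then A(ker E) is closed in W. -/
/-!
Write `M = A(ker E)` and `R = ran E`. By (N1), `closure M ≤ closure(R + M) = closure R + M`, and the
intersection condition says `closure M ∩ closure R ≤ M`. In the modular lattice of subspaces these
two facts together with `M ≤ closure M` force `closure M = M`.
-/

theorem Submodule.isClosed_of_topologicalClosure_le_sup_of_inf_le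
    {R M : Type*} [Ring R] [AddCommGroup M] [Module R M] [TopologicalSpace M]
    [ContinuousAdd M] [ContinuousConstSMul R M] {N P : Submodule R M}
    (hsup : N.topologicalClosure ≤ N ⊔ P) (hinf : N.topologicalClosure ⊓ P ≤ N) :
    IsClosed (N : Set M) := by
  rw [eq_of_le_of_inf_le_of_le_sup N.le_topologicalClosure hinf hsup]
  exact N.isClosed_topologicalClosure

theorem isClosed_map_ker_of_normal_strong_general
    {U W : Type*} [NormedAddCommGroup U] [NormedSpace ℝ U]
    [NormedAddCommGroup W] [NormedSpace ℝ W]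
    (E A : U →L[ℝ] W)
    (hN1 : (LinearMap.range (E : U →ₗ[ℝ] W)).topologicalClosure ⊔ Submodule.map (A : U →ₗ[ℝ] W) (LinearMap.ker (E : U →ₗ[ℝ] W))
        = (LinearMap.range (E : U →ₗ[ℝ] W) ⊔ Submodule.map (A : U →ₗ[ℝ] W) (LinearMap.ker (E : U →ₗ[ℝ] W))).topologicalClosure)
    (hInt : Submodule.map (A : U →ₗ[ℝ] W) (LinearMap.ker (E : U →ₗ[ℝ] W)) ⊓ (LinearMap.range (E : U →ₗ[ℝ] W)).topologicalClosure
        = (Submodule.map (A : U →ₗ[ℝ] W) (LinearMap.ker (E : U →ₗ[ℝ] W))).topologicalClosure ⊓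
          (LinearMap.range (E : U →ₗ[ℝ] W)).topologicalClosure) :
    IsClosed ((Submodule.map (A : U →ₗ[ℝ] W) (LinearMap.ker (E : U →ₗ[ℝ] W))) : Set W) := by
  set M := Submodule.map (A : U →ₗ[ℝ] W) (LinearMap.ker (E : U →ₗ[ℝ] W))
  set R := LinearMap.range (E : U →ₗ[ℝ] W)
  have hsup : M.topologicalClosure ≤ M ⊔ R.topologicalClosure := by
    rw [sup_comm, hN1]
    exact Submodule.topologicalClosure_mono le_sup_right
  exact Submodule.isClosed_of_topologicalClosure_le_sup_of_inf_le hsup (hInt ▸ inf_le_left)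

/-- Assume (N1) `closure(ran E) + A(ker E) = closure(ran E + A(ker E))` and
the strengthened intersection condition
`A(ker E) ∩ closure(ran E) = closure(A(ker E)) ∩ closure(ran E)`.
Then `A(ker E)` is closed in `W`. -/
theorem isClosed_map_ker_of_normal_strong
    {U W : Type*} [NormedAddCommGroup U] [NormedSpace ℝ U] [CompleteSpace U]
    [NormedAddCommGroup W] [NormedSpace ℝ W] [CompleteSpace W]
    (E A : U →L[ℝ] W)
    (hN1 : (LinearMap.range (E : U →ₗ[ℝ] W)).topologicalClosure ⊔ Submodule.map (A : U →ₗ[ℝ] W) (LinearMap.ker (E : U →ₗ[ℝ] W))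
        = (LinearMap.range (E : U →ₗ[ℝ] W) ⊔ Submodule.map (A : U →ₗ[ℝ] W) (LinearMap.ker (E : U →ₗ[ℝ] W))).topologicalClosure)
    (hInt : Submodule.map (A : U →ₗ[ℝ] W) (LinearMap.ker (E : U →ₗ[ℝ] W)) ⊓ (LinearMap.range (E : U →ₗ[ℝ] W)).topologicalClosure
        = (Submodule.map (A : U →ₗ[ℝ] W) (LinearMap.ker (E : U →ₗ[ℝ] W))).topologicalClosure ⊓
          (LinearMap.range (E : U →ₗ[ℝ] W)).topologicalClosure) :
    IsClosed ((Submodule.map (A : U →ₗ[ℝ] W) (LinearMap.ker (E : U →ₗ[ℝ] W))) : Set W) :=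
  isClosed_map_ker_of_normal_strong_general E A hN1 hInt
end

section
/- Let U and W be Banach spaces, E, A : U → W bounded linear operators, and U₁ := {u ∈ U : A u ∈ closure(ran E)}. Let J_U : U₁ ⧸ (ker E ∩ U₁) → U ⧸ ker E be the continuous linear map induced by the inclusion U₁ ⊆ U (sending u + (ker E ∩ U₁) to u + ker E). Then: (a) J_U is injective; (b) the range of J_U is contained in the set {u + ker E : A u ∈ closure(ran E + A(ker E))}; (c) if condition (N1): closure(ran E) + A(ker E) = closure(ran E + A(ker E)) holds, then the range of J_U equals {u + ker E : A u ∈ closure(ran E + A(ker E))}. Equivalently for (c): for every u ∈ U with A u ∈ closure(ran E + A(ker E)) there exists k ∈ ker E with A(u − k) ∈ closure(ran E). -/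
/-!
The inclusion `U₁ ⊆ U` induces the map `U₁ ⧸ (U₁ ∩ ker E) → U ⧸ ker E`, which is injective with
range the image of `U₁` in `U ⧸ ker E`. Since `U₁ ⊆ A⁻¹(closure(ran E + A(ker E)))`, part (b)
follows. Under (N1), `A u = c + A k` with `c ∈ closure(ran E)` and `k ∈ ker E` gives `u - k ∈ U₁`,
that is `A⁻¹(closure(ran E) + A(ker E)) = U₁ + ker E`, whose image in `U ⧸ ker E` is that of `U₁`.
-/

namespace Submodule

variable {R M M₂ : Type*} [Ring R] [AddCommGroup M] [Module R M] [AddCommGroup M₂] [Module R M₂]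

theorem comap_sup_map_eq (f : M →ₗ[R] M₂) (S : Submodule R M₂) (N : Submodule R M) :
    comap f (S ⊔ map f N) = comap f S ⊔ N := by
  refine le_antisymm (fun u hu => ?_) (sup_le (comap_mono le_sup_left) ?_)
  · obtain ⟨s, hs, _, ⟨n, hn, rfl⟩, hsum⟩ := mem_sup.mp (mem_comap.mp hu)
    have hun : u - n ∈ comap f S := by
      rw [mem_comap, map_sub, ← hsum, add_sub_cancel_right]
      exact hs
    simpa using add_mem_sup hun hn
  · exact le_comap_map f N |>.trans (comap_mono le_sup_right)

variable {p N : Submodule R M}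

theorem eq_mapQ_subtype_of_mk_eq {f : (p ⧸ N.comap p.subtype) →ₗ[R] M ⧸ N}
    (hf : ∀ u : p, f (Quotient.mk u) = Quotient.mk (u : M)) :
    f = mapQ (N.comap p.subtype) N p.subtype le_rfl :=
  linearMap_qext _ (LinearMap.ext hf)

theorem ker_mapQ_subtype : LinearMap.ker (mapQ (N.comap p.subtype) N p.subtype le_rfl) = ⊥ := by
  rw [ker_mapQ, mkQ_map_self]

theorem range_mapQ_subtype :
    LinearMap.range (mapQ (N.comap p.subtype) N p.subtype le_rfl) = map N.mkQ p := by
  rw [range_mapQ, range_subtype]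

end Submodule

theorem JU_injective_range_general
    {U W : Type*} [NormedAddCommGroup U] [NormedSpace ℝ U]
    [NormedAddCommGroup W] [NormedSpace ℝ W]
    (E A : U →L[ℝ] W)
    (JU : (↥(Submodule.comap (A : U →ₗ[ℝ] W) (LinearMap.range (E : U →ₗ[ℝ] W)).topologicalClosure) ⧸
            Submodule.comap
              (Submodule.comap (A : U →ₗ[ℝ] W) (LinearMap.range (E : U →ₗ[ℝ] W)).topologicalClosure).subtype
              (LinearMap.ker (E : U →ₗ[ℝ] W)))
          →L[ℝ] (U ⧸ LinearMap.ker (E : U →ₗ[ℝ] W)))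
    (hJU : ∀ u : ↥(Submodule.comap (A : U →ₗ[ℝ] W) (LinearMap.range (E : U →ₗ[ℝ] W)).topologicalClosure),
        JU (Submodule.Quotient.mk u) = Submodule.Quotient.mk (u : U)) :
    Function.Injective JU
    ∧ LinearMap.range JU.toLinearMap ≤
        Submodule.map (LinearMap.ker (E : U →ₗ[ℝ] W)).mkQ
          (Submodule.comap (A : U →ₗ[ℝ] W)
            (LinearMap.range (E : U →ₗ[ℝ] W) ⊔ Submodule.map (A : U →ₗ[ℝ] W) (LinearMap.ker (E : U →ₗ[ℝ] W))).topologicalClosure)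
    ∧ ((LinearMap.range (E : U →ₗ[ℝ] W)).topologicalClosure ⊔ Submodule.map (A : U →ₗ[ℝ] W) (LinearMap.ker (E : U →ₗ[ℝ] W))
          = (LinearMap.range (E : U →ₗ[ℝ] W) ⊔ Submodule.map (A : U →ₗ[ℝ] W) (LinearMap.ker (E : U →ₗ[ℝ] W))).topologicalClosure →
        LinearMap.range JU.toLinearMap =
          Submodule.map (LinearMap.ker (E : U →ₗ[ℝ] W)).mkQ
            (Submodule.comap (A : U →ₗ[ℝ] W)
              (LinearMap.range (E : U →ₗ[ℝ] W) ⊔ Submodule.map (A : U →ₗ[ℝ] W) (LinearMap.ker (E : U →ₗ[ℝ] W))).topologicalClosure)) := by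
  have hJ : JU.toLinearMap = Submodule.mapQ _ _ (Submodule.subtype _) le_rfl :=
    Submodule.eq_mapQ_subtype_of_mk_eq hJU
  have hrange : LinearMap.range JU.toLinearMap = Submodule.map (LinearMap.ker (E : U →ₗ[ℝ] W)).mkQ
      (Submodule.comap (A : U →ₗ[ℝ] W) (LinearMap.range (E : U →ₗ[ℝ] W)).topologicalClosure) := by
    rw [hJ, Submodule.range_mapQ_subtype]
  refine ⟨?_, ?_, fun hN1 => ?_⟩
  · change Function.Injective JU.toLinearMap
    rw [hJ, ← LinearMap.ker_eq_bot]
    exact Submodule.ker_mapQ_subtype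
  · rw [hrange]
    exact Submodule.map_mono (Submodule.comap_mono (Submodule.topologicalClosure_mono le_sup_left))
  · rw [hrange, ← hN1, Submodule.comap_sup_map_eq, Submodule.map_sup, Submodule.mkQ_map_self,
      sup_bot_eq]

/-- Let `U₁ = {u : A u ∈ closure (ran E)}` and let
`J_U : U₁ ⧸ (ker E ∩ U₁) → U ⧸ ker E` be the (unique) continuous linear map induced by
the inclusion `U₁ ⊆ U`.  Then `J_U` is injective, its range is contained in the subspace
`{u + ker E : A u ∈ closure(ran E + A(ker E))}` of `U ⧸ ker E`, and under condition (N1)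
its range equals that subspace. -/
theorem JU_injective_range
    {U W : Type*} [NormedAddCommGroup U] [NormedSpace ℝ U] [CompleteSpace U]
    [NormedAddCommGroup W] [NormedSpace ℝ W] [CompleteSpace W]
    (E A : U →L[ℝ] W)
    (JU : (↥(Submodule.comap (A : U →ₗ[ℝ] W) (LinearMap.range (E : U →ₗ[ℝ] W)).topologicalClosure) ⧸
            Submodule.comap
              (Submodule.comap (A : U →ₗ[ℝ] W) (LinearMap.range (E : U →ₗ[ℝ] W)).topologicalClosure).subtype
              (LinearMap.ker (E : U →ₗ[ℝ] W)))
          →L[ℝ] (U ⧸ LinearMap.ker (E : U →ₗ[ℝ] W)))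
    (hJU : ∀ u : ↥(Submodule.comap (A : U →ₗ[ℝ] W) (LinearMap.range (E : U →ₗ[ℝ] W)).topologicalClosure),
        JU (Submodule.Quotient.mk u) = Submodule.Quotient.mk (u : U)) :
    Function.Injective JU
    ∧ LinearMap.range JU.toLinearMap ≤
        Submodule.map (LinearMap.ker (E : U →ₗ[ℝ] W)).mkQ
          (Submodule.comap (A : U →ₗ[ℝ] W)
            (LinearMap.range (E : U →ₗ[ℝ] W) ⊔ Submodule.map (A : U →ₗ[ℝ] W) (LinearMap.ker (E : U →ₗ[ℝ] W))).topologicalClosure)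
    ∧ ((LinearMap.range (E : U →ₗ[ℝ] W)).topologicalClosure ⊔ Submodule.map (A : U →ₗ[ℝ] W) (LinearMap.ker (E : U →ₗ[ℝ] W))
          = (LinearMap.range (E : U →ₗ[ℝ] W) ⊔ Submodule.map (A : U →ₗ[ℝ] W) (LinearMap.ker (E : U →ₗ[ℝ] W))).topologicalClosure →
        LinearMap.range JU.toLinearMap =
          Submodule.map (LinearMap.ker (E : U →ₗ[ℝ] W)).mkQ
            (Submodule.comap (A : U →ₗ[ℝ] W)
              (LinearMap.range (E : U →ₗ[ℝ] W) ⊔ Submodule.map (A : U →ₗ[ℝ] W) (LinearMap.ker (E : U →ₗ[ℝ] W))).topologicalClosure)) :=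
  JU_injective_range_general E A JU hJU
end

section
/- Let U and W be Banach spaces, E, A : U → W bounded linear operators, W₁ := closure(ran E), U₁ := {u ∈ U : A u ∈ closure(ran E)}, and let q : W → W ⧸ closure(A(ker E)) be the canonical quotient map. Let J_W : W₁ ⧸ closure(A(ker E ∩ U₁)) → W ⧸ closure(A(ker E)) be the continuous linear map induced by the inclusion W₁ ⊆ W (well-defined since closure(A(ker E ∩ U₁)) ⊆ closure(A(ker E))). Then: (a) the range of J_W is contained in the closure of q(ran E); (b) if closure(ran E) + closure(A(ker E)) = closure(ran E + A(ker E)), then the range of J_W equals the closure of q(ran E); (c) if condition (N2): closure(closure(ran E) ∩ A(ker E)) = closure(ran E) ∩ closure(A(ker E)) holds, then J_W is injective. -/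
lemma map_inf_comap_aux {R U W : Type*} [Ring R] [AddCommGroup U] [Module R U]
    [AddCommGroup W] [Module R W] (f : U →ₗ[R] W) (p : Submodule R U) (q : Submodule R W) :
    Submodule.map f (p ⊓ Submodule.comap f q) = Submodule.map f p ⊓ q := by
  ext x
  constructor
  · rintro ⟨u, ⟨hu1, hu2⟩, rfl⟩
    exact ⟨⟨u, hu1, rfl⟩, hu2⟩
  · rintro ⟨⟨u, hu, rfl⟩, hx⟩
    exact ⟨u, ⟨hu, hx⟩, rfl⟩

lemma JW_aux {W : Type*} [NormedAddCommGroup W] [NormedSpace ℝ W]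
    (S M P : Submodule ℝ W) (hP : P = M ⊓ S.topologicalClosure)
    (JW : (↥S.topologicalClosure ⧸
            Submodule.comap S.topologicalClosure.subtype P.topologicalClosure)
          →L[ℝ] (W ⧸ M.topologicalClosure))
    (hJW : ∀ w : ↥S.topologicalClosure,
        JW (Submodule.Quotient.mk w) = Submodule.Quotient.mk (w : W)) :
    ((LinearMap.range JW.toLinearMap : Set (W ⧸ M.topologicalClosure))
        ⊆ closure (M.topologicalClosure.mkQ '' (S : Set W)))
    ∧ (S.topologicalClosure ⊔ M.topologicalClosure = (S ⊔ M).topologicalClosure →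
        (LinearMap.range JW.toLinearMap : Set (W ⧸ M.topologicalClosure))
          = closure (M.topologicalClosure.mkQ '' (S : Set W)))
    ∧ ((S.topologicalClosure ⊓ M).topologicalClosure
          = S.topologicalClosure ⊓ M.topologicalClosure →
        Function.Injective JW) := by
  have hqc : Continuous M.topologicalClosure.mkQ := M.topologicalClosure.isOpenQuotientMap_mkQ.continuous
  have parta : (LinearMap.range JW.toLinearMap : Set (W ⧸ M.topologicalClosure)) ⊆ closure (M.topologicalClosure.mkQ '' (S : Set W)) := by
    rintro z ⟨x, rfl⟩
    obtain ⟨w, rfl⟩ := Submodule.Quotient.mk_surjective _ x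
    rw [ContinuousLinearMap.coe_coe, hJW]
    have hw : (w : W) ∈ closure (S : Set W) := w.2
    have : M.topologicalClosure.mkQ (w : W) ∈ M.topologicalClosure.mkQ '' closure (S : Set W) := ⟨w, hw, rfl⟩
    exact image_closure_subset_closure_image hqc this
  refine ⟨parta, ?_, ?_⟩
  · -- part (b)
    intro hsum
    refine Set.Subset.antisymm parta ?_
    intro z hz
    obtain ⟨w, rfl⟩ := Submodule.Quotient.mk_surjective _ z
    have hpre : M.topologicalClosure.mkQ ⁻¹' (M.topologicalClosure.mkQ '' (S : Set W)) = ((S ⊔ M.topologicalClosure : Submodule ℝ W) : Set W) := by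
      ext x
      simp only [Set.mem_preimage, Set.mem_image, SetLike.mem_coe]
      constructor
      · rintro ⟨s, hs, hqs⟩
        have hmem : x - s ∈ M.topologicalClosure := by
          rw [Submodule.mkQ_apply, Submodule.mkQ_apply] at hqs
          exact (Submodule.Quotient.eq M.topologicalClosure).mp hqs.symm
        have hx : x = s + (x - s) := by abel
        rw [hx]
        exact Submodule.add_mem_sup hs hmem
      · intro hx
        obtain ⟨s, hs, n, hn, rfl⟩ := Submodule.mem_sup.mp hx
        refine ⟨s, hs, ?_⟩
        rw [Submodule.mkQ_apply, Submodule.mkQ_apply, Submodule.Quotient.eq]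
        simpa using M.topologicalClosure.neg_mem hn
    have hw : (w : W) ∈ closure (((S ⊔ M.topologicalClosure : Submodule ℝ W) : Set W)) := by
      rw [← hpre, ← (M.topologicalClosure.isOpenMap_mkQ).preimage_closure_eq_closure_preimage hqc]
      exact hz
    have hle : (S ⊔ M.topologicalClosure).topologicalClosure ≤ S.topologicalClosure ⊔ M.topologicalClosure := by
      rw [hsum]
      refine Submodule.topologicalClosure_minimal _ ?_ (Submodule.isClosed_topologicalClosure _)
      exact sup_le (le_trans le_sup_left (Submodule.le_topologicalClosure _))
        (Submodule.topologicalClosure_mono le_sup_right)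
    have hw2 : w ∈ S.topologicalClosure ⊔ M.topologicalClosure := hle hw
    obtain ⟨a, ha, b, hb, hab⟩ := Submodule.mem_sup.mp hw2
    refine ⟨Submodule.Quotient.mk ⟨a, ha⟩, ?_⟩
    rw [ContinuousLinearMap.coe_coe, hJW]
    apply (Submodule.Quotient.eq M.topologicalClosure).mpr
    have : a - w = -b := by rw [← hab]; abel
    rw [this]
    exact M.topologicalClosure.neg_mem hb
  · -- part (c)
    intro hN2
    have hzero : ∀ x, JW x = 0 → x = 0 := by
      intro x hx
      obtain ⟨w, rfl⟩ := Submodule.Quotient.mk_surjective _ x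
      rw [hJW] at hx
      have hwN : (w : W) ∈ M.topologicalClosure := (Submodule.Quotient.mk_eq_zero M.topologicalClosure).mp hx
      rw [Submodule.Quotient.mk_eq_zero]
      show (w : W) ∈ P.topologicalClosure
      rw [hP, inf_comm (a := M) (b := S.topologicalClosure), hN2]
      exact ⟨w.2, hwN⟩
    intro a b hab
    have := hzero (a - b) (by rw [map_sub, hab, sub_self])
    exact sub_eq_zero.mp this

/-- Let `W₁ = closure(ran E)`, `U₁ = {u : A u ∈ closure(ran E)}`,
`q : W → W ⧸ closure(A(ker E))` the quotient map, and let
`J_W : W₁ ⧸ closure(A(ker E ∩ U₁)) → W ⧸ closure(A(ker E))` be the continuous linear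
map induced by the inclusion `W₁ ⊆ W`.  Then (a) the range of `J_W` is contained in
the closure of `q(ran E)`; (b) if `closure(ran E) + closure(A(ker E)) =
closure(ran E + A(ker E))` then the range of `J_W` equals that closure; (c) under
condition (N2), `J_W` is injective. -/
theorem JW_range_injective
    {U W : Type*} [NormedAddCommGroup U] [NormedSpace ℝ U] [CompleteSpace U]
    [NormedAddCommGroup W] [NormedSpace ℝ W] [CompleteSpace W]
    (E A : U →L[ℝ] W)
    (JW : (↥((LinearMap.range (E : U →ₗ[ℝ] W)).topologicalClosure) ⧸
            Submodule.comap ((LinearMap.range (E : U →ₗ[ℝ] W)).topologicalClosure).subtype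
              ((Submodule.map (A : U →ₗ[ℝ] W) (LinearMap.ker (E : U →ₗ[ℝ] W) ⊓
                Submodule.comap (A : U →ₗ[ℝ] W) (LinearMap.range (E : U →ₗ[ℝ] W)).topologicalClosure)).topologicalClosure))
          →L[ℝ] (W ⧸ (Submodule.map (A : U →ₗ[ℝ] W) (LinearMap.ker (E : U →ₗ[ℝ] W))).topologicalClosure))
    (hJW : ∀ w : ↥((LinearMap.range (E : U →ₗ[ℝ] W)).topologicalClosure),
        JW (Submodule.Quotient.mk w) = Submodule.Quotient.mk (w : W)) :
    ((LinearMap.range JW.toLinearMap : Set (W ⧸ (Submodule.map (A : U →ₗ[ℝ] W) (LinearMap.ker (E : U →ₗ[ℝ] W))).topologicalClosure))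
        ⊆ closure ((Submodule.map (A : U →ₗ[ℝ] W) (LinearMap.ker (E : U →ₗ[ℝ] W))).topologicalClosure.mkQ ''
            (LinearMap.range (E : U →ₗ[ℝ] W) : Set W)))
    ∧ ((LinearMap.range (E : U →ₗ[ℝ] W)).topologicalClosure ⊔
          (Submodule.map (A : U →ₗ[ℝ] W) (LinearMap.ker (E : U →ₗ[ℝ] W))).topologicalClosure
          = (LinearMap.range (E : U →ₗ[ℝ] W) ⊔ Submodule.map (A : U →ₗ[ℝ] W) (LinearMap.ker (E : U →ₗ[ℝ] W))).topologicalClosure →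
        (LinearMap.range JW.toLinearMap :
            Set (W ⧸ (Submodule.map (A : U →ₗ[ℝ] W) (LinearMap.ker (E : U →ₗ[ℝ] W))).topologicalClosure))
          = closure ((Submodule.map (A : U →ₗ[ℝ] W) (LinearMap.ker (E : U →ₗ[ℝ] W))).topologicalClosure.mkQ ''
              (LinearMap.range (E : U →ₗ[ℝ] W) : Set W)))
    ∧ (((LinearMap.range (E : U →ₗ[ℝ] W)).topologicalClosure ⊓
            Submodule.map (A : U →ₗ[ℝ] W) (LinearMap.ker (E : U →ₗ[ℝ] W))).topologicalClosure
          = (LinearMap.range (E : U →ₗ[ℝ] W)).topologicalClosure ⊓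
            (Submodule.map (A : U →ₗ[ℝ] W) (LinearMap.ker (E : U →ₗ[ℝ] W))).topologicalClosure →
        Function.Injective JW) := by
  have hP : Submodule.map (A : U →ₗ[ℝ] W) (LinearMap.ker (E : U →ₗ[ℝ] W) ⊓
      Submodule.comap (A : U →ₗ[ℝ] W) (LinearMap.range (E : U →ₗ[ℝ] W)).topologicalClosure)
      = Submodule.map (A : U →ₗ[ℝ] W) (LinearMap.ker (E : U →ₗ[ℝ] W)) ⊓ (LinearMap.range (E : U →ₗ[ℝ] W)).topologicalClosure :=
    map_inf_comap_aux (A : U →ₗ[ℝ] W) (LinearMap.ker (E : U →ₗ[ℝ] W))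
      (LinearMap.range (E : U →ₗ[ℝ] W)).topologicalClosure
  exact JW_aux (LinearMap.range (E : U →ₗ[ℝ] W)) (Submodule.map (A : U →ₗ[ℝ] W) (LinearMap.ker (E : U →ₗ[ℝ] W))) _ hP JW hJW
end

section
/- Let U and W be Banach spaces, E, A : U → W bounded linear operators, and U₁ := {u ∈ U : A u ∈ closure(ran E)}. (a) If A(ker E) is closed in W, then A(ker E ∩ U₁) is closed in W. (b) If conditions (N1): closure(ran E) + A(ker E) = closure(ran E + A(ker E)) and (N2): closure(closure(ran E) ∩ A(ker E)) = closure(ran E) ∩ closure(A(ker E)) hold and A(ker E ∩ U₁) is closed in W, then A(ker E) is closed in W. -/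
/-!
Everything happens inside `W`. Writing `C = closure (ran E)` and `M = A(ker E)`, the reduced image
`A(ker E ∩ U₁)` is just `M ⊓ C`, which is closed when `M` is. Conversely, (N1) puts `closure M`
inside `C ⊔ M`, so by the modular law `closure M = M ⊔ (C ⊓ closure M)`; by (N2) the second
summand is `closure (C ⊓ M) = C ⊓ M ≤ M`.
-/

namespace Submodule

variable {R W : Type*} [Ring R] [AddCommGroup W] [Module R W] [TopologicalSpace W]
  [ContinuousAdd W] [ContinuousConstSMul R W]

theorem topologicalClosure_eq_self_of_le_sup {M C : Submodule R W}
    (hsup : M.topologicalClosure ≤ C ⊔ M) (hinf : C ⊓ M.topologicalClosure ≤ M) :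
    M.topologicalClosure = M := by
  refine le_antisymm ?_ M.le_topologicalClosure
  calc M.topologicalClosure = (M ⊔ C) ⊓ M.topologicalClosure := by
        rw [sup_comm, inf_eq_right.mpr hsup]
    _ = M ⊔ C ⊓ M.topologicalClosure := sup_inf_assoc_of_le C M.le_topologicalClosure
    _ ≤ M := sup_le le_rfl hinf

end Submodule

theorem isClosed_map_ker_transfer_general
    {U W : Type*} [NormedAddCommGroup U] [NormedSpace ℝ U]
    [NormedAddCommGroup W] [NormedSpace ℝ W]
    (E A : U →L[ℝ] W) :
    (IsClosed (((Submodule.map (A : U →ₗ[ℝ] W) (LinearMap.ker (E : U →ₗ[ℝ] W)) : Submodule ℝ W)) : Set W) →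
      IsClosed (((Submodule.map (A : U →ₗ[ℝ] W) (LinearMap.ker (E : U →ₗ[ℝ] W) ⊓
        Submodule.comap (A : U →ₗ[ℝ] W) (LinearMap.range (E : U →ₗ[ℝ] W)).topologicalClosure) : Submodule ℝ W)) : Set W))
    ∧ ((LinearMap.range (E : U →ₗ[ℝ] W)).topologicalClosure ⊔ Submodule.map (A : U →ₗ[ℝ] W) (LinearMap.ker (E : U →ₗ[ℝ] W))
          = (LinearMap.range (E : U →ₗ[ℝ] W) ⊔ Submodule.map (A : U →ₗ[ℝ] W) (LinearMap.ker (E : U →ₗ[ℝ] W))).topologicalClosure →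
        ((LinearMap.range (E : U →ₗ[ℝ] W)).topologicalClosure ⊓
            Submodule.map (A : U →ₗ[ℝ] W) (LinearMap.ker (E : U →ₗ[ℝ] W))).topologicalClosure
          = (LinearMap.range (E : U →ₗ[ℝ] W)).topologicalClosure ⊓
            (Submodule.map (A : U →ₗ[ℝ] W) (LinearMap.ker (E : U →ₗ[ℝ] W))).topologicalClosure →
        IsClosed (((Submodule.map (A : U →ₗ[ℝ] W) (LinearMap.ker (E : U →ₗ[ℝ] W) ⊓
          Submodule.comap (A : U →ₗ[ℝ] W) (LinearMap.range (E : U →ₗ[ℝ] W)).topologicalClosure) : Submodule ℝ W)) : Set W) →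
        IsClosed (((Submodule.map (A : U →ₗ[ℝ] W) (LinearMap.ker (E : U →ₗ[ℝ] W)) : Submodule ℝ W)) : Set W)) := by
  set M := Submodule.map (A : U →ₗ[ℝ] W) (LinearMap.ker (E : U →ₗ[ℝ] W))
  set C := (LinearMap.range (E : U →ₗ[ℝ] W)).topologicalClosure
  rw [← Submodule.map_inf_eq_map_inf_comap]
  refine ⟨fun hM => hM.inter (Submodule.isClosed_topologicalClosure _), fun hN1 hN2 hMC => ?_⟩
  have hsup : M.topologicalClosure ≤ C ⊔ M :=
    hN1 ▸ Submodule.topologicalClosure_mono le_sup_right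
  have hinf : C ⊓ M.topologicalClosure ≤ M := by
    rw [← hN2, inf_comm, hMC.submodule_topologicalClosure_eq]
    exact inf_le_left
  rw [← Submodule.topologicalClosure_eq_self_of_le_sup hsup hinf]
  exact M.isClosed_topologicalClosure

/-- With `U₁ = {u : A u ∈ closure(ran E)}`:
(a) if `A(ker E)` is closed then `A(ker E ∩ U₁)` is closed;
(b) under conditions (N1) and (N2), if `A(ker E ∩ U₁)` is closed then `A(ker E)` is closed. -/
theorem isClosed_map_ker_transfer
    {U W : Type*} [NormedAddCommGroup U] [NormedSpace ℝ U] [CompleteSpace U]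
    [NormedAddCommGroup W] [NormedSpace ℝ W] [CompleteSpace W]
    (E A : U →L[ℝ] W) :
    (IsClosed (((Submodule.map (A : U →ₗ[ℝ] W) (LinearMap.ker (E : U →ₗ[ℝ] W)) : Submodule ℝ W)) : Set W) →
      IsClosed (((Submodule.map (A : U →ₗ[ℝ] W) (LinearMap.ker (E : U →ₗ[ℝ] W) ⊓
        Submodule.comap (A : U →ₗ[ℝ] W) (LinearMap.range (E : U →ₗ[ℝ] W)).topologicalClosure) : Submodule ℝ W)) : Set W))
    ∧ ((LinearMap.range (E : U →ₗ[ℝ] W)).topologicalClosure ⊔ Submodule.map (A : U →ₗ[ℝ] W) (LinearMap.ker (E : U →ₗ[ℝ] W))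
          = (LinearMap.range (E : U →ₗ[ℝ] W) ⊔ Submodule.map (A : U →ₗ[ℝ] W) (LinearMap.ker (E : U →ₗ[ℝ] W))).topologicalClosure →
        ((LinearMap.range (E : U →ₗ[ℝ] W)).topologicalClosure ⊓
            Submodule.map (A : U →ₗ[ℝ] W) (LinearMap.ker (E : U →ₗ[ℝ] W))).topologicalClosure
          = (LinearMap.range (E : U →ₗ[ℝ] W)).topologicalClosure ⊓
            (Submodule.map (A : U →ₗ[ℝ] W) (LinearMap.ker (E : U →ₗ[ℝ] W))).topologicalClosure →
        IsClosed (((Submodule.map (A : U →ₗ[ℝ] W) (LinearMap.ker (E : U →ₗ[ℝ] W) ⊓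
          Submodule.comap (A : U →ₗ[ℝ] W) (LinearMap.range (E : U →ₗ[ℝ] W)).topologicalClosure) : Submodule ℝ W)) : Set W) →
        IsClosed (((Submodule.map (A : U →ₗ[ℝ] W) (LinearMap.ker (E : U →ₗ[ℝ] W)) : Submodule ℝ W)) : Set W)) :=
  isClosed_map_ker_transfer_general E A
end

section
/- Let U and W be Banach spaces, E, A : U → W bounded linear operators, and U₁ := {u ∈ U : A u ∈ closure(ran E)}. Assume the system (E, A) is normal, i.e., conditions (N1) and (N2) hold. Then: (a) (for every w ∈ W there exists u ∈ U with w − A u ∈ closure(ran E)) if and only if (for every w ∈ W there exists u ∈ U with w − A u ∈ closure(ran E + A(ker E))); and (b) (A is injective on ker E and A(ker E) is closed in W) if and only if (A is injective on ker E ∩ U₁ and A(ker E ∩ U₁) is closed in W). (These equivalences express that [A_ored1] is invertible iff [A_cred1_ored1] is invertible, and [A_cred1] is invertible iff [A_ored1_cred1] is invertible.) -/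
/-!
Write `R̄ = closure (ran E)` and `M = A (ker E)`, so that `A (ker E ∩ U₁) = R̄ ∩ M`.
(N1) says that closing `ran E + M` only closes `ran E`; hence `closure (ran E + M) + ran A = R̄ + ran A`,
which is part (a). For (b), (N1) decomposes a point of `closure M` as `c + m` with `c ∈ R̄`, `m ∈ M`;
then `c ∈ R̄ ∩ closure M = closure (R̄ ∩ M)` by (N2), so `c ∈ M` once `R̄ ∩ M` is closed.
Injectivity transfers because the kernel of `A` already lies in `U₁`.
-/

namespace Submodule

variable {R U W : Type*} [Ring R] [AddCommGroup U] [Module R U] [AddCommGroup W] [Module R W]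

theorem sup_range_eq_top_iff {p : Submodule R W} {f : U →ₗ[R] W} :
    p ⊔ LinearMap.range f = ⊤ ↔ ∀ w, ∃ u, w - f u ∈ p := by
  simp only [eq_top_iff', mem_sup, LinearMap.mem_range, exists_exists_eq_and]
  refine forall_congr' fun w => ⟨fun ⟨c, hc, u, hu⟩ => ⟨u, ?_⟩, fun ⟨u, hu⟩ => ⟨_, hu, u, ?_⟩⟩
  · rwa [← hu, add_sub_cancel_right]
  · exact sub_add_cancel w (f u)

theorem isClosed_of_isClosed_inf [TopologicalSpace W] [IsTopologicalAddGroup W]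
    [ContinuousConstSMul R W] {S M : Submodule R W}
    (hsup : M.topologicalClosure ≤ S ⊔ M)
    (hinf : S ⊓ M.topologicalClosure ≤ (S ⊓ M).topologicalClosure)
    (hclosed : IsClosed ((S ⊓ M : Submodule R W) : Set W)) : IsClosed (M : Set W) := by
  have hM : M.topologicalClosure ≤ M :=
    calc M.topologicalClosure = (S ⊔ M) ⊓ M.topologicalClosure := (inf_eq_right.mpr hsup).symm
      _ = S ⊓ M.topologicalClosure ⊔ M := by
        rw [sup_comm, sup_inf_assoc_of_le _ M.le_topologicalClosure, sup_comm]
      _ ≤ S ⊓ M ⊔ M := by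
        rw [hclosed.submodule_topologicalClosure_eq] at hinf
        exact sup_le_sup_right hinf _
      _ = M := sup_eq_right.mpr inf_le_right
  rw [← le_antisymm hM M.le_topologicalClosure]
  exact M.isClosed_topologicalClosure

end Submodule

theorem LinearMap.injOn_inf_comap_iff {R U W : Type*} [Ring R] [AddCommGroup U] [Module R U]
    [AddCommGroup W] [Module R W] {f : U →ₗ[R] W} {p : Submodule R U} {q : Submodule R W} :
    Set.InjOn f (p ⊓ Submodule.comap f q : Submodule R U) ↔ Set.InjOn f p := by
  have hker : LinearMap.ker f ≤ Submodule.comap f q := LinearMap.ker_le_comap f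
  rw [← disjoint_ker_iff_injOn, ← disjoint_ker_iff_injOn, disjoint_iff, disjoint_iff,
    inf_assoc, inf_eq_right.mpr hker]

theorem pivot_invertibility_equiv_of_normal_general
    {U W : Type*} [NormedAddCommGroup U] [NormedSpace ℝ U]
    [NormedAddCommGroup W] [NormedSpace ℝ W]
    (E A : U →L[ℝ] W)
    (hN1 : (LinearMap.range (E : U →ₗ[ℝ] W)).topologicalClosure ⊔ Submodule.map (A : U →ₗ[ℝ] W) (LinearMap.ker (E : U →ₗ[ℝ] W))
        = (LinearMap.range (E : U →ₗ[ℝ] W) ⊔ Submodule.map (A : U →ₗ[ℝ] W) (LinearMap.ker (E : U →ₗ[ℝ] W))).topologicalClosure)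
    (hN2 : ((LinearMap.range (E : U →ₗ[ℝ] W)).topologicalClosure ⊓
          Submodule.map (A : U →ₗ[ℝ] W) (LinearMap.ker (E : U →ₗ[ℝ] W))).topologicalClosure
        = (LinearMap.range (E : U →ₗ[ℝ] W)).topologicalClosure ⊓
          (Submodule.map (A : U →ₗ[ℝ] W) (LinearMap.ker (E : U →ₗ[ℝ] W))).topologicalClosure) :
    ((∀ w : W, ∃ u : U, w - A u ∈ closure ((LinearMap.range (E : U →ₗ[ℝ] W) : Set W))) ↔
      (∀ w : W, ∃ u : U, w - A u ∈
        closure ((LinearMap.range (E : U →ₗ[ℝ] W) ⊔ Submodule.map (A : U →ₗ[ℝ] W) (LinearMap.ker (E : U →ₗ[ℝ] W)) : Submodule ℝ W) :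
          Set W)))
    ∧ ((Set.InjOn A (LinearMap.ker (E : U →ₗ[ℝ] W) : Set U)
          ∧ IsClosed ((Submodule.map (A : U →ₗ[ℝ] W) (LinearMap.ker (E : U →ₗ[ℝ] W))) : Set W)) ↔
        (Set.InjOn A ((LinearMap.ker (E : U →ₗ[ℝ] W) ⊓
            Submodule.comap (A : U →ₗ[ℝ] W) (LinearMap.range (E : U →ₗ[ℝ] W)).topologicalClosure : Submodule ℝ U) : Set U)
          ∧ IsClosed ((Submodule.map (A : U →ₗ[ℝ] W) (LinearMap.ker (E : U →ₗ[ℝ] W) ⊓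
              Submodule.comap (A : U →ₗ[ℝ] W) (LinearMap.range (E : U →ₗ[ℝ] W)).topologicalClosure)) : Set W))) := by
  refine ⟨?_, ?_⟩
  · simp_rw [← Submodule.topologicalClosure_coe, SetLike.mem_coe, ← ContinuousLinearMap.coe_coe A,
      ← Submodule.sup_range_eq_top_iff]
    rw [← hN1, sup_assoc, sup_eq_right.mpr (LinearMap.map_le_range (f := (A : U →ₗ[ℝ] W)))]
  · rw [← ContinuousLinearMap.coe_coe A, LinearMap.injOn_inf_comap_iff,
      ← Submodule.map_inf_eq_map_inf_comap, inf_comm]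
    refine and_congr_right fun _ => ⟨(Submodule.isClosed_topologicalClosure _).inter, fun h => ?_⟩
    exact Submodule.isClosed_of_isClosed_inf
      (hN1 ▸ Submodule.topologicalClosure_mono le_sup_right) hN2.ge h

/-- Assume the system `(E, A)` is normal ((N1) and (N2)), and let
`U₁ = {u : A u ∈ closure(ran E)}`.  Then:
(a) `[A_ored1]` is invertible iff `[A_cred1_ored1]` is invertible, i.e.
`(∀ w, ∃ u, w - A u ∈ closure(ran E)) ↔ (∀ w, ∃ u, w - A u ∈ closure(ran E + A(ker E)))`;
(b) `[A_cred1]` is invertible iff `[A_ored1_cred1]` is invertible, i.e.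
(`A` injective on `ker E` and `A(ker E)` closed) ↔
(`A` injective on `ker E ∩ U₁` and `A(ker E ∩ U₁)` closed). -/
theorem pivot_invertibility_equiv_of_normal
    {U W : Type*} [NormedAddCommGroup U] [NormedSpace ℝ U] [CompleteSpace U]
    [NormedAddCommGroup W] [NormedSpace ℝ W] [CompleteSpace W]
    (E A : U →L[ℝ] W)
    (hN1 : (LinearMap.range (E : U →ₗ[ℝ] W)).topologicalClosure ⊔ Submodule.map (A : U →ₗ[ℝ] W) (LinearMap.ker (E : U →ₗ[ℝ] W))
        = (LinearMap.range (E : U →ₗ[ℝ] W) ⊔ Submodule.map (A : U →ₗ[ℝ] W) (LinearMap.ker (E : U →ₗ[ℝ] W))).topologicalClosure)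
    (hN2 : ((LinearMap.range (E : U →ₗ[ℝ] W)).topologicalClosure ⊓
          Submodule.map (A : U →ₗ[ℝ] W) (LinearMap.ker (E : U →ₗ[ℝ] W))).topologicalClosure
        = (LinearMap.range (E : U →ₗ[ℝ] W)).topologicalClosure ⊓
          (Submodule.map (A : U →ₗ[ℝ] W) (LinearMap.ker (E : U →ₗ[ℝ] W))).topologicalClosure) :
    ((∀ w : W, ∃ u : U, w - A u ∈ closure ((LinearMap.range (E : U →ₗ[ℝ] W) : Set W))) ↔
      (∀ w : W, ∃ u : U, w - A u ∈
        closure ((LinearMap.range (E : U →ₗ[ℝ] W) ⊔ Submodule.map (A : U →ₗ[ℝ] W) (LinearMap.ker (E : U →ₗ[ℝ] W)) : Submodule ℝ W) :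
          Set W)))
    ∧ ((Set.InjOn A (LinearMap.ker (E : U →ₗ[ℝ] W) : Set U)
          ∧ IsClosed ((Submodule.map (A : U →ₗ[ℝ] W) (LinearMap.ker (E : U →ₗ[ℝ] W))) : Set W)) ↔
        (Set.InjOn A ((LinearMap.ker (E : U →ₗ[ℝ] W) ⊓
            Submodule.comap (A : U →ₗ[ℝ] W) (LinearMap.range (E : U →ₗ[ℝ] W)).topologicalClosure : Submodule ℝ U) : Set U)
          ∧ IsClosed ((Submodule.map (A : U →ₗ[ℝ] W) (LinearMap.ker (E : U →ₗ[ℝ] W) ⊓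
              Submodule.comap (A : U →ₗ[ℝ] W) (LinearMap.range (E : U →ₗ[ℝ] W)).topologicalClosure)) : Set W))) :=
  pivot_invertibility_equiv_of_normal_general E A hN1 hN2
end

section
/- Let U and W be complex Banach spaces, E, A : U → W bounded linear operators, W₁ := closure(ran E), and U₁ := {u ∈ U : A u ∈ closure(ran E)}. Assume that for every w ∈ W there exists u ∈ U with w − A u ∈ closure(ran E) (equivalently, the injective pivot operator [A_ored1] : U ⧸ U₁ → W ⧸ W₁ induced by A is bijective). Then for every λ ∈ ℂ, the operator λE + A : U → W is bijective if and only if its restriction to U₁, viewed as an operator from U₁ to W₁ (well-defined since (λE + A)(U₁) ⊆ W₁), is bijective. In other words, ρ(E, A) = ρ(E_ored1, A_ored1). -/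
/-!
Write `T = λE + A` and `W₁ = closure(ran E)`. Since `T u - A u = λ E u ∈ W₁`, the space `U₁` is
`T⁻¹(W₁)` and the pivot hypothesis says that `T` is onto modulo `W₁`. For any linear `T`, the
restriction `T⁻¹(W₁) → W₁` is injective iff `T` is, because `ker T ⊆ T⁻¹(W₁)`; and when `T` is onto
modulo `W₁` it is onto iff `T` is: lift `w` to `u₀` with `w - T u₀ ∈ W₁`, then correct `u₀` by a
preimage of `w - T u₀` in `T⁻¹(W₁)`.
-/

section RestrictToPreimage

variable {R M N : Type*} [Ring R] [AddCommGroup M] [Module R M] [AddCommGroup N] [Module R N]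
  {f : M →ₗ[R] N} {p : Submodule R N} {q : Submodule R M} {g : q → p}

theorem injective_restrict_comap_iff (hq : p.comap f ≤ q) (hg : ∀ x, (g x : N) = f x) :
    Function.Injective g ↔ Function.Injective f := by
  refine ⟨fun hinj => (injective_iff_map_eq_zero f).2 fun x hx => ?_,
    fun hinj x y hxy => Subtype.ext (hinj (by rw [← hg, ← hg, hxy]))⟩
  have hxq : x ∈ q := hq (by simp [hx])
  have : g ⟨x, hxq⟩ = g 0 := Subtype.ext (by simp [hg, hx])
  exact congrArg Subtype.val (hinj this)

theorem surjective_restrict_comap_of_surjective (hq : p.comap f ≤ q) (hg : ∀ x, (g x : N) = f x)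
    (hf : Function.Surjective f) : Function.Surjective g := by
  rintro ⟨w, hw⟩
  obtain ⟨x, rfl⟩ := hf w
  exact ⟨⟨x, hq hw⟩, Subtype.ext (hg _)⟩

theorem surjective_of_surjective_restrict_comap (hg : ∀ x, (g x : N) = f x)
    (hf : ∀ w, ∃ x, w - f x ∈ p) (hsurj : Function.Surjective g) : Function.Surjective f := by
  intro w
  obtain ⟨x₀, hx₀⟩ := hf w
  obtain ⟨x, hx⟩ := hsurj ⟨w - f x₀, hx₀⟩
  refine ⟨x + x₀, ?_⟩
  rw [map_add, ← hg, hx, sub_add_cancel]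

theorem bijective_restrict_comap_iff (hq : p.comap f ≤ q) (hg : ∀ x, (g x : N) = f x)
    (hf : ∀ w, ∃ x, w - f x ∈ p) : Function.Bijective g ↔ Function.Bijective f :=
  and_congr (injective_restrict_comap_iff hq hg)
    ⟨surjective_of_surjective_restrict_comap hg hf, surjective_restrict_comap_of_surjective hq hg⟩

end RestrictToPreimage

theorem smul_add_apply_sub_mem_of_range_le {R M N : Type*} [CommRing R] [AddCommGroup M]
    [Module R M] [AddCommGroup N] [Module R N] {E A : M →ₗ[R] N} {p : Submodule R N}
    (hE : LinearMap.range E ≤ p) (l : R) (x : M) : (l • E + A) x - A x ∈ p := by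
  simpa using p.smul_mem l (hE (LinearMap.mem_range_self E x))

theorem resolvent_eq_observation_reduced_general
    {U W : Type*} [NormedAddCommGroup U] [NormedSpace ℂ U]
    [NormedAddCommGroup W] [NormedSpace ℂ W]
    (E A : U →L[ℂ] W)
    (hpivot : ∀ w : W, ∃ u : U, w - A u ∈ closure ((LinearMap.range (E : U →ₗ[ℂ] W) : Set W))) :
    ∀ l : ℂ,
      ∀ F : ↥(Submodule.comap (A : U →ₗ[ℂ] W) (LinearMap.range (E : U →ₗ[ℂ] W)).topologicalClosure) →
            ↥((LinearMap.range (E : U →ₗ[ℂ] W)).topologicalClosure),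
        (∀ u : ↥(Submodule.comap (A : U →ₗ[ℂ] W) (LinearMap.range (E : U →ₗ[ℂ] W)).topologicalClosure),
            (F u : W) = (l • E + A) (u : U)) →
        (Function.Bijective ⇑(l • E + A) ↔ Function.Bijective F) := by
  intro l F hF
  have hdiff : ∀ u, (l • E + A) u - A u ∈ (LinearMap.range (E : U →ₗ[ℂ] W)).topologicalClosure :=
    smul_add_apply_sub_mem_of_range_le (A := (A : U →ₗ[ℂ] W)) (Submodule.le_topologicalClosure _) l
  have hU₁ : Submodule.comap ((l • E + A : U →L[ℂ] W) : U →ₗ[ℂ] W)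
      (LinearMap.range (E : U →ₗ[ℂ] W)).topologicalClosure ≤
      Submodule.comap (A : U →ₗ[ℂ] W) (LinearMap.range (E : U →ₗ[ℂ] W)).topologicalClosure :=
    fun u hu => (Submodule.sub_mem_iff_right _ (Submodule.mem_comap.1 hu)).1 (hdiff u)
  have honto : ∀ w, ∃ u, w - (l • E + A) u ∈ (LinearMap.range (E : U →ₗ[ℂ] W)).topologicalClosure :=
    fun w => (hpivot w).imp fun u hu => by
      rw [← sub_sub_sub_cancel_right w _ (A u)]
      exact Submodule.sub_mem _ hu (hdiff u)
  exact (bijective_restrict_comap_iff hU₁ (fun u => hF u) honto).symm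

/-- If the pivot operator `[A_ored1]` is bijective, i.e. for every
`w ∈ W` there is `u` with `w - A u ∈ closure(ran E)`, then for every `λ ∈ ℂ` the operator
`λE + A` is bijective iff its restriction, viewed as an operator from
`U₁ = {u : A u ∈ closure(ran E)}` to `W₁ = closure(ran E)`, is bijective; i.e.
`ρ(E, A) = ρ(E_ored1, A_ored1)`. -/
theorem resolvent_eq_observation_reduced
    {U W : Type*} [NormedAddCommGroup U] [NormedSpace ℂ U] [CompleteSpace U]
    [NormedAddCommGroup W] [NormedSpace ℂ W] [CompleteSpace W]
    (E A : U →L[ℂ] W)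
    (hpivot : ∀ w : W, ∃ u : U, w - A u ∈ closure ((LinearMap.range (E : U →ₗ[ℂ] W) : Set W))) :
    ∀ l : ℂ,
      ∀ F : ↥(Submodule.comap (A : U →ₗ[ℂ] W) (LinearMap.range (E : U →ₗ[ℂ] W)).topologicalClosure) →
            ↥((LinearMap.range (E : U →ₗ[ℂ] W)).topologicalClosure),
        (∀ u : ↥(Submodule.comap (A : U →ₗ[ℂ] W) (LinearMap.range (E : U →ₗ[ℂ] W)).topologicalClosure),
            (F u : W) = (l • E + A) (u : U)) →
        (Function.Bijective ⇑(l • E + A) ↔ Function.Bijective F) :=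
  resolvent_eq_observation_reduced_general E A hpivot
end

section
/- Let U and W be complex Banach spaces and E, A : U → W bounded linear operators. Assume that A is injective on ker E and that A(ker E) is closed in W (i.e., the pivot operator [A_cred1] : ker E → closure(A(ker E)), the restriction of A, is bijective). Then for every λ ∈ ℂ, the operator λE + A : U → W is bijective if and only if the induced operator from U ⧸ ker E to W ⧸ closure(A(ker E)) sending u + ker E to (λE + A)u + closure(A(ker E)) (well-defined since (λE + A)(ker E) ⊆ closure(A(ker E))) is bijective. In other words, ρ(E, A) = ρ(E_cred1, A_cred1). -/
/-!
On `ker E` the operator `λE + A` agrees with `A`, so it is injective there and maps `ker E` onto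
`A(ker E)`, which is closed. The statement is therefore an instance of pure linear algebra: a linear
map `T` that is injective on a submodule `K` is bijective iff the induced map `M ⧸ K → N ⧸ T(K)` is.
-/

open Function

namespace Submodule

variable {R M N : Type*} [Ring R] [AddCommGroup M] [Module R M] [AddCommGroup N] [Module R N]

theorem map_eq_map_of_eqOn {f g : M →ₗ[R] N} {p : Submodule R M} (h : Set.EqOn f g p) :
    p.map f = p.map g :=
  SetLike.coe_injective <| by simpa only [map_coe] using Set.image_congr h

variable {T : M →ₗ[R] N} {K : Submodule R M} {q : Submodule R N}

theorem surjective_mapQ_iff (hq : K.map T = q) {h : K ≤ q.comap T} :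
    Surjective (K.mapQ q T h) ↔ Surjective T := by
  subst hq
  constructor
  · intro hs w
    obtain ⟨x, hx⟩ := hs (Quotient.mk w)
    induction x using Quotient.induction_on with | _ u => ?_
    obtain ⟨k, hk, hTk⟩ := (Quotient.eq _).mp hx
    exact ⟨u - k, by rw [map_sub, hTk, sub_sub_cancel]⟩
  · intro hs y
    induction y using Quotient.induction_on with | _ w => ?_
    obtain ⟨u, rfl⟩ := hs w
    exact ⟨Quotient.mk u, rfl⟩

theorem injective_mapQ_iff (hq : K.map T = q) (hK : Set.InjOn T K) {h : K ≤ q.comap T} :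
    Injective (K.mapQ q T h) ↔ Injective T := by
  subst hq
  constructor
  · intro hi
    refine (injective_iff_map_eq_zero T).mpr fun u hu => ?_
    have hmk : K.mapQ _ T h (Quotient.mk u) = K.mapQ _ T h 0 := by simp [hu]
    have huK : u ∈ K := (Quotient.mk_eq_zero K).mp (hi hmk)
    exact hK huK K.zero_mem (by rw [hu, map_zero])
  · intro hi x y hxy
    induction x using Quotient.induction_on with | _ u => ?_
    induction y using Quotient.induction_on with | _ v => ?_
    obtain ⟨k, hk, hTk⟩ := (Quotient.eq _).mp hxy
    rw [← map_sub] at hTk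
    exact (Quotient.eq _).mpr (hi hTk ▸ hk)

theorem bijective_mapQ_iff (hq : K.map T = q) (hK : Set.InjOn T K) {h : K ≤ q.comap T} :
    Bijective (K.mapQ q T h) ↔ Bijective T :=
  and_congr (injective_mapQ_iff hq hK) (surjective_mapQ_iff hq)

end Submodule

open Submodule in
theorem resolvent_eq_control_reduced_general
    {U W : Type*} [NormedAddCommGroup U] [NormedSpace ℂ U]
    [NormedAddCommGroup W] [NormedSpace ℂ W]
    (E A : U →L[ℂ] W)
    (hinj : Set.InjOn A (LinearMap.ker (E : U →ₗ[ℂ] W) : Set U))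
    (hclosed : IsClosed ((Submodule.map (A : U →ₗ[ℂ] W) (LinearMap.ker (E : U →ₗ[ℂ] W))) : Set W)) :
    ∀ l : ℂ,
      ∀ F : (U ⧸ LinearMap.ker (E : U →ₗ[ℂ] W)) →
            (W ⧸ (Submodule.map (A : U →ₗ[ℂ] W) (LinearMap.ker (E : U →ₗ[ℂ] W))).topologicalClosure),
        (∀ u : U, F (Submodule.Quotient.mk u) = Submodule.Quotient.mk ((l • E + A) u)) →
        (Function.Bijective ⇑(l • E + A) ↔ Function.Bijective F) := by
  intro l F hF
  let T : U →ₗ[ℂ] W := ((l • E + A : U →L[ℂ] W) : U →ₗ[ℂ] W)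
  have hTA : Set.EqOn T A (E : U →ₗ[ℂ] W).ker := fun u hu => by simp [T, LinearMap.mem_ker.mp hu]
  have hq : (E : U →ₗ[ℂ] W).ker.map T =
      ((E : U →ₗ[ℂ] W).ker.map (A : U →ₗ[ℂ] W)).topologicalClosure := by
    rw [map_eq_map_of_eqOn hTA, hclosed.submodule_topologicalClosure_eq]
  have hFT : F = (E : U →ₗ[ℂ] W).ker.mapQ _ T (hq ▸ le_comap_map T _) :=
    funext fun x => Quotient.induction_on _ x hF
  rw [hFT, bijective_mapQ_iff hq (hinj.congr hTA.symm)]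
  rfl

/-- If the pivot operator `[A_cred1]` is bijective, i.e. `A` is injective
on `ker E` and `A(ker E)` is closed, then for every `λ ∈ ℂ` the operator `λE + A` is
bijective iff the induced operator from `U ⧸ ker E` to `W ⧸ closure(A(ker E))` (sending
`u + ker E` to `(λE + A)u + closure(A(ker E))`) is bijective; i.e.
`ρ(E, A) = ρ(E_cred1, A_cred1)`. -/
theorem resolvent_eq_control_reduced
    {U W : Type*} [NormedAddCommGroup U] [NormedSpace ℂ U] [CompleteSpace U]
    [NormedAddCommGroup W] [NormedSpace ℂ W] [CompleteSpace W]
    (E A : U →L[ℂ] W)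
    (hinj : Set.InjOn A (LinearMap.ker (E : U →ₗ[ℂ] W) : Set U))
    (hclosed : IsClosed ((Submodule.map (A : U →ₗ[ℂ] W) (LinearMap.ker (E : U →ₗ[ℂ] W))) : Set W)) :
    ∀ l : ℂ,
      ∀ F : (U ⧸ LinearMap.ker (E : U →ₗ[ℂ] W)) →
            (W ⧸ (Submodule.map (A : U →ₗ[ℂ] W) (LinearMap.ker (E : U →ₗ[ℂ] W))).topologicalClosure),
        (∀ u : U, F (Submodule.Quotient.mk u) = Submodule.Quotient.mk ((l • E + A) u)) →
        (Function.Bijective ⇑(l • E + A) ↔ Function.Bijective F) :=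
  resolvent_eq_control_reduced_general E A hinj hclosed
end

section
/- Let U and W be complex Banach spaces and E, A : U → W bounded linear operators. If A is not injective on ker E, or if A(ker E) is not closed in W (i.e., the pivot operator [A_cred1] : ker E → closure(A(ker E)) is not invertible), then for every λ ∈ ℂ the operator λE + A : U → W is not bijective; in particular the resolvent set ρ(E, A) is empty. -/
/-!
On `ker E` the operator `λE + A` coincides with `A`. So if `λE + A` is bijective, `A` is
injective on `ker E`, and `A (ker E)` is the image of the closed subspace `ker E` under
`λE + A`, which by the open mapping theorem is a homeomorphism, hence closed.
-/

theorem ContinuousLinearMap.isClosedMap_of_bijective {𝕜 E F : Type*}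
    [NontriviallyNormedField 𝕜] [NormedAddCommGroup E] [NormedSpace 𝕜 E] [CompleteSpace E]
    [NormedAddCommGroup F] [NormedSpace 𝕜 F] [CompleteSpace F]
    {T : E →L[𝕜] F} (hT : Function.Bijective T) : IsClosedMap T :=
  (ContinuousLinearEquiv.ofBijective T (LinearMap.ker_eq_bot.mpr hT.injective)
    (LinearMap.range_eq_top.mpr hT.surjective)).toHomeomorph.isClosedMap

theorem ContinuousLinearMap.eqOn_smul_add_ker {R M N : Type*} [CommSemiring R]
    [TopologicalSpace M] [AddCommMonoid M] [Module R M]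
    [TopologicalSpace N] [AddCommMonoid N] [Module R N] [ContinuousConstSMul R N]
    [ContinuousAdd N] (c : R) (E A : M →L[R] N) :
    Set.EqOn ⇑(c • E + A) A (LinearMap.ker (E : M →ₗ[R] N)) := fun x hx => by
  have hEx : E x = 0 := hx
  simp only [add_apply, smul_apply, hEx, smul_zero, zero_add]

/-- If the pivot operator `[A_cred1]` is not invertible — i.e. `A` is
not injective on `ker E`, or `A(ker E)` is not closed — then no `λE + A` is bijective;
in particular the resolvent set `ρ(E, A)` is empty. -/
theorem resolvent_empty_of_ctrl_pivot_not_invertible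
    {U W : Type*} [NormedAddCommGroup U] [NormedSpace ℂ U] [CompleteSpace U]
    [NormedAddCommGroup W] [NormedSpace ℂ W] [CompleteSpace W]
    (E A : U →L[ℂ] W)
    (h : ¬ Set.InjOn A (LinearMap.ker (E : U →ₗ[ℂ] W) : Set U)
        ∨ ¬ IsClosed ((Submodule.map (A : U →ₗ[ℂ] W) (LinearMap.ker (E : U →ₗ[ℂ] W))) : Set W)) :
    ∀ l : ℂ, ¬ Function.Bijective ⇑(l • E + A) := by
  intro l hbij
  have hagree := E.eqOn_smul_add_ker l A
  rcases h with hinj | hclosed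
  · exact hinj (hagree.injOn_iff.mp hbij.injective.injOn)
  · apply hclosed
    rw [Submodule.map_coe]
    exact hagree.image_eq ▸ ContinuousLinearMap.isClosedMap_of_bijective hbij _ E.isClosed_ker
end

section
/- Let U and H be real Hilbert spaces, D : U → H a bounded linear operator, and define E : U → U* (U* the continuous dual of U) by (E u)(v) = ⟪D u, D v⟫_H. Let A : U → U* be a bounded linear operator that is coercive: there exists c > 0 with (A u)(u) ≥ c‖u‖² for all u ∈ U. Assume moreover that A(ker E) is closed in U*. Then the system (E, A) has control index one: for every u ∈ U, E u ∈ closure(A(ker E)) implies u ∈ ker E (equivalently E u = 0). -/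
/-!
If `E u = A w` with `w ∈ ker E = ker D`, then `A w w = E u w = ⟪D u, D w⟫ = 0`, so coercivity
forces `w = 0` and hence `E u = 0`. Closedness of `A(ker E)` reduces membership in its closure
to membership in `A(ker E)` itself.
-/

section

variable {U : Type*} [NormedAddCommGroup U] [NormedSpace ℝ U]

theorem eq_zero_of_apply_self_eq_zero_of_coercive {A : U →L[ℝ] U →L[ℝ] ℝ}
    (hA : ∃ c : ℝ, 0 < c ∧ ∀ u : U, c * ‖u‖ ^ 2 ≤ A u u) {w : U} (hw : A w w = 0) : w = 0 := by
  obtain ⟨c, hc, hcA⟩ := hA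
  have hle : c * ‖w‖ ^ 2 ≤ 0 := hw ▸ hcA w
  have hnorm : ‖w‖ ^ 2 = 0 := le_antisymm (nonpos_of_mul_nonpos_right hle hc) (sq_nonneg _)
  simpa using hnorm

end

section

variable {U H : Type*} [NormedAddCommGroup U] [InnerProductSpace ℝ U]
  [NormedAddCommGroup H] [InnerProductSpace ℝ H]
  {D : U →L[ℝ] H} {E : U →L[ℝ] U →L[ℝ] ℝ}

theorem map_eq_zero_of_gram_eq_zero (hE : ∀ u v : U, E u v = inner ℝ (D u) (D v)) {w : U}
    (hw : E w = 0) : D w = 0 := by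
  have hDw : inner ℝ (D w) (D w) = (0 : ℝ) := by rw [← hE, hw, zero_apply]
  exact inner_self_eq_zero.mp hDw

theorem gram_apply_eq_zero_of_mem_ker (hE : ∀ u v : U, E u v = inner ℝ (D u) (D v)) (u : U)
    {w : U} (hw : E w = 0) : E u w = 0 := by
  rw [hE, map_eq_zero_of_gram_eq_zero hE hw, inner_zero_right]

theorem gram_mem_ker_of_mem_map_ker (hE : ∀ u v : U, E u v = inner ℝ (D u) (D v))
    {A : U →L[ℝ] U →L[ℝ] ℝ} (hA : ∃ c : ℝ, 0 < c ∧ ∀ u : U, c * ‖u‖ ^ 2 ≤ A u u) {u : U}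
    (hu : E u ∈ Submodule.map (A : U →ₗ[ℝ] U →L[ℝ] ℝ) (LinearMap.ker (E : U →ₗ[ℝ] U →L[ℝ] ℝ))) :
    u ∈ LinearMap.ker (E : U →ₗ[ℝ] U →L[ℝ] ℝ) := by
  obtain ⟨w, hw, hAw⟩ := hu
  have hEw : E w = 0 := hw
  have hAww : A w w = 0 := by
    rw [show A w = E u from hAw, gram_apply_eq_zero_of_mem_ker hE u hEw]
  have hw0 : w = 0 := eq_zero_of_apply_self_eq_zero_of_coercive hA hAww
  show E u = 0
  rw [← show A w = E u from hAw, hw0, map_zero]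

end

theorem variational_control_index_one_general
    {U H : Type*} [NormedAddCommGroup U] [InnerProductSpace ℝ U]
    [NormedAddCommGroup H] [InnerProductSpace ℝ H]
    (D : U →L[ℝ] H) (E A : U →L[ℝ] (U →L[ℝ] ℝ))
    (hE : ∀ u v : U, E u v = (inner ℝ (D u) (D v) : ℝ))
    (hcoercive : ∃ c : ℝ, 0 < c ∧ ∀ u : U, c * ‖u‖ ^ 2 ≤ A u u)
    (hclosed : IsClosed ((Submodule.map (A : U →ₗ[ℝ] (U →L[ℝ] ℝ)) (LinearMap.ker (E : U →ₗ[ℝ] (U →L[ℝ] ℝ)))) : Set (U →L[ℝ] ℝ))) :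
    ∀ u : U, E u ∈ (Submodule.map (A : U →ₗ[ℝ] (U →L[ℝ] ℝ)) (LinearMap.ker (E : U →ₗ[ℝ] (U →L[ℝ] ℝ)))).topologicalClosure →
      u ∈ LinearMap.ker (E : U →ₗ[ℝ] (U →L[ℝ] ℝ)) := by
  intro u hu
  rw [hclosed.submodule_topologicalClosure_eq] at hu
  exact gram_mem_ker_of_mem_map_ker hE hcoercive hu

/-- **variational systems have control index one.** Let `U`, `H` be real
Hilbert spaces, `D : U → H` bounded, `E = D*D : U → U*` (i.e. `(E u)(v) = ⟪D u, D v⟫`),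
and let `A : U → U*` be bounded and coercive.  If `A(ker E)` is closed in `U*`, then
`E u ∈ closure(A(ker E))` implies `u ∈ ker E`. -/
theorem variational_control_index_one
    {U H : Type*} [NormedAddCommGroup U] [InnerProductSpace ℝ U] [CompleteSpace U]
    [NormedAddCommGroup H] [InnerProductSpace ℝ H] [CompleteSpace H]
    (D : U →L[ℝ] H) (E A : U →L[ℝ] (U →L[ℝ] ℝ))
    (hE : ∀ u v : U, E u v = (inner ℝ (D u) (D v) : ℝ))
    (hcoercive : ∃ c : ℝ, 0 < c ∧ ∀ u : U, c * ‖u‖ ^ 2 ≤ A u u)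
    (hclosed : IsClosed ((Submodule.map (A : U →ₗ[ℝ] (U →L[ℝ] ℝ)) (LinearMap.ker (E : U →ₗ[ℝ] (U →L[ℝ] ℝ)))) : Set (U →L[ℝ] ℝ))) :
    ∀ u : U, E u ∈ (Submodule.map (A : U →ₗ[ℝ] (U →L[ℝ] ℝ)) (LinearMap.ker (E : U →ₗ[ℝ] (U →L[ℝ] ℝ)))).topologicalClosure →
      u ∈ LinearMap.ker (E : U →ₗ[ℝ] (U →L[ℝ] ℝ)) :=
  variational_control_index_one_general D E A hE hcoercive hclosed
end

section
/- Let U be a Banach space, W a real Hilbert space, and E, A : U → W bounded linear operators. Assume there exists β ∈ ℝ such that ⟪E u, A u⟫ ≤ β‖E u‖² for all u ∈ U. Then ⟪E u, A k⟫ = 0 for all u ∈ U and all k ∈ ker E; consequently ran E ∩ closure(A(ker E)) = {0}, i.e., the system (E, A) has control index one. -/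
/-! Adding a kernel element `k` to `u` leaves `E u` unchanged but shifts `⟪E u, A u⟫` by
`t ⟪E u, A k⟫` along the line `u + t k`; an upper bound depending on `E u` alone therefore
forces `⟪E u, A k⟫ = 0`. Thus `ran E ⊥ A(ker E)`, hence `ran E` is orthogonal to the closure of
`A(ker E)` and meets it only in `0`. -/

theorem eq_zero_of_forall_add_mul_le {a b c : ℝ} (h : ∀ t : ℝ, a + t * c ≤ b) : c = 0 := by
  by_contra hc
  have := h ((b - a + 1) / c)
  rw [div_mul_cancel₀ _ hc] at this
  linarith

theorem inner_apply_eq_zero_of_mem_ker_of_inner_le {U W : Type*} [AddCommGroup U] [Module ℝ U]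
    [NormedAddCommGroup W] [InnerProductSpace ℝ W] (E A : U →ₗ[ℝ] W) (bound : W → ℝ)
    (hbound : ∀ u, inner ℝ (E u) (A u) ≤ bound (E u)) (u : U) {k : U} (hk : k ∈ LinearMap.ker E) :
    inner ℝ (E u) (A k) = 0 := by
  rw [LinearMap.mem_ker] at hk
  refine eq_zero_of_forall_add_mul_le (a := inner ℝ (E u) (A u)) (b := bound (E u)) fun t => ?_
  simpa [hk, inner_add_right, real_inner_smul_right] using hbound (u + t • k)

theorem Submodule.inf_topologicalClosure_eq_bot_of_le_orthogonal {W : Type*}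
    [NormedAddCommGroup W] [InnerProductSpace ℝ W] {S K : Submodule ℝ W} (h : S ≤ Kᗮ) :
    S ⊓ K.topologicalClosure = ⊥ := by
  rw [← disjoint_iff]
  rw [← K.orthogonal_closure] at h
  exact K.topologicalClosure.orthogonal_disjoint.symm.mono_left h

theorem control_index_one_of_semibounded_general
    {U W : Type*} [NormedAddCommGroup U] [NormedSpace ℝ U]
    [NormedAddCommGroup W] [InnerProductSpace ℝ W]
    (E A : U →L[ℝ] W)
    (h : ∃ β : ℝ, ∀ u : U, (inner ℝ (E u) (A u) : ℝ) ≤ β * ‖E u‖ ^ 2) :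
    (∀ u : U, ∀ k ∈ LinearMap.ker (E : U →ₗ[ℝ] W), (inner ℝ (E u) (A k) : ℝ) = 0)
    ∧ LinearMap.range (E : U →ₗ[ℝ] W) ⊓ (Submodule.map (A : U →ₗ[ℝ] W) (LinearMap.ker (E : U →ₗ[ℝ] W))).topologicalClosure = ⊥ := by
  obtain ⟨β, hβ⟩ := h
  have hperp : ∀ u : U, ∀ k ∈ LinearMap.ker (E : U →ₗ[ℝ] W), (inner ℝ (E u) (A k) : ℝ) = 0 :=
    fun u k hk => inner_apply_eq_zero_of_mem_ker_of_inner_le (E : U →ₗ[ℝ] W) A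
      (fun w => β * ‖w‖ ^ 2) hβ u hk
  refine ⟨hperp, Submodule.inf_topologicalClosure_eq_bot_of_le_orthogonal ?_⟩
  rintro _ ⟨u, rfl⟩ _ ⟨k, hk, rfl⟩
  rw [real_inner_comm]
  exact hperp u k hk

/-- Let `U` be a Banach space, `W` a real Hilbert space and
`E, A : U → W` bounded.  If `⟪E u, A u⟫ ≤ β‖E u‖²` for some `β` and all `u`, then
`⟪E u, A k⟫ = 0` for all `u ∈ U`, `k ∈ ker E`; consequently
`ran E ∩ closure(A(ker E)) = {0}`, i.e. the system has control index one. -/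
theorem control_index_one_of_semibounded
    {U W : Type*} [NormedAddCommGroup U] [NormedSpace ℝ U] [CompleteSpace U]
    [NormedAddCommGroup W] [InnerProductSpace ℝ W] [CompleteSpace W]
    (E A : U →L[ℝ] W)
    (h : ∃ β : ℝ, ∀ u : U, (inner ℝ (E u) (A u) : ℝ) ≤ β * ‖E u‖ ^ 2) :
    (∀ u : U, ∀ k ∈ LinearMap.ker (E : U →ₗ[ℝ] W), (inner ℝ (E u) (A k) : ℝ) = 0)
    ∧ LinearMap.range (E : U →ₗ[ℝ] W) ⊓ (Submodule.map (A : U →ₗ[ℝ] W) (LinearMap.ker (E : U →ₗ[ℝ] W))).topologicalClosure = ⊥ :=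
  control_index_one_of_semibounded_general E A h
end
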